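/- Let (Q,R) be a gentle presentation satisfying the no-relation-free-cycle condition. Let w be a string of length ≥ 1 and let a be an arrow of Q such that the walk a·w is a string. Suppose there exists an arrow b with b ≠ a and s(b) = s(a). Then there is a unique maximal R-avoiding directed path v whose first arrow is b, and the walk v⁻¹·a·w (the inverse walk of v, followed by a, followed by w) is a string. Hence the operation of adding a hook at the starting point of w, producing the string w_ℓ = v⁻¹ a w, is well defined. -/

import Mathlib

/-- A letter of the double quiver: an arrow `a` together with a direction, `true` for
the direct letter `a` and `false` for the formal inverse `a⁻¹`. -/
abbrev Letter (A : Type*) := A × Bool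

/-- Source of a letter of the double quiver: `s(a)` for `a`, `t(a)` for `a⁻¹`. -/
def srcL {V A : Type*} (s t : A → V) (x : Letter A) : V :=
  if x.2 then s x.1 else t x.1

/-- Target of a letter of the double quiver: `t(a)` for `a`, `s(a)` for `a⁻¹`. -/
def tgtL {V A : Type*} (s t : A → V) (x : Letter A) : V :=
  if x.2 then t x.1 else s x.1

/-- Two consecutive letters `x, y` are allowed in a string: they are composable in the
double quiver, the pair is reduced (not of the form `a a⁻¹` or `a⁻¹ a`), and it avoids
the relations (`a b` with `(a,b) ∈ R` and `b⁻¹ a⁻¹` with `(a,b) ∈ R` are forbidden). -/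
def StringPair {V A : Type*} (s t : A → V) (R : Set (A × A)) (x y : Letter A) : Prop :=
  tgtL s t x = srcL s t y ∧
  ¬ (x.1 = y.1 ∧ x.2 ≠ y.2) ∧
  (x.2 = true → y.2 = true → (x.1, y.1) ∉ R) ∧
  (x.2 = false → y.2 = false → (y.1, x.1) ∉ R)

/-- `w` is a string of `(Q, R)` of length ≥ 1. -/
def IsStringWord {V A : Type*} (s t : A → V) (R : Set (A × A))
    (w : List (Letter A)) : Prop :=
  w ≠ [] ∧ w.Chain' (StringPair s t R)

/-- `p` is a directed path in `Q`. -/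
def IsDirPath {V A : Type*} (s t : A → V) (p : List A) : Prop :=
  p ≠ [] ∧ p.Chain' (fun a b => t a = s b)

/-- `p` avoids the set of quadratic relations `R`. -/
def AvoidsRel {A : Type*} (R : Set (A × A)) (p : List A) : Prop :=
  p.Chain' (fun a b => (a, b) ∉ R)

/-- `p` contains a consecutive pair of arrows belonging to `R`. -/
def HasRelPair {A : Type*} (R : Set (A × A)) (p : List A) : Prop :=
  ∃ (i : ℕ) (h : i + 1 < p.length),
    (p.get ⟨i, Nat.lt_of_succ_lt h⟩, p.get ⟨i + 1, h⟩) ∈ R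

/-- No arrow can be appended to `p` so that it stays an `R`-avoiding directed path. -/
def RightMax {V A : Type*} (s t : A → V) (R : Set (A × A)) (p : List A) : Prop :=
  ∀ c : A, ¬ (IsDirPath s t (p ++ [c]) ∧ AvoidsRel R (p ++ [c]))

/-- The inverse walk `p⁻¹` of a directed path `p = b₁ ⋯ bₖ` of `Q`, as a word in the
double quiver: `bₖ⁻¹ ⋯ b₁⁻¹`. -/
def invWalk {A : Type*} (p : List A) : List (Letter A) :=
  (p.map (fun b => ((b, false) : Letter A))).reverse

/-!
Without relation-free cycles, an `R`-avoiding directed path repeats no arrow (a repetition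
would cut out a relation-free cycle), so its length is bounded by the number of arrows and
extending `[b]` arrow by arrow terminates in a maximal path. By (G2) an `R`-avoiding path is
determined arrow by arrow from its first arrow, so two such paths starting with `b` are
comparable for the prefix order, and right maximality forces equality. Finally `v⁻¹ a w` is a
string: inside `v⁻¹` the conditions are those of `v`, and at the junction `b⁻¹ a` is reduced
since `b ≠ a` and composable since `s b = s a`.
-/

theorem List.exists_cons_append_singleton_infix_of_not_nodup {α : Type*} {l : List α}
    (h : ¬ l.Nodup) : ∃ x l', x :: l' ++ [x] <:+: l := by
  induction l with
  | nil => simp at h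
  | cons y l ih =>
    rw [List.nodup_cons, not_and_or, not_not] at h
    rcases h with hy | hl
    · obtain ⟨l₁, l₂, rfl⟩ := List.append_of_mem hy
      exact ⟨y, l₁, (List.prefix_append _ l₂).isInfix.trans (by simp)⟩
    · obtain ⟨x, l', hinf⟩ := ih hl
      exact ⟨x, l', List.infix_cons hinf⟩

section GentleQuiver

variable {V A : Type*} {s t : A → V} {R : Set (A × A)}

def NoRelFreeCycle (s t : A → V) (R : Set (A × A)) : Prop :=
  ∀ (p : List A) (hp : p ≠ []), p.IsChain (fun a b => t a = s b) →
    s (p.head hp) = t (p.getLast hp) → HasRelPair R p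

theorem AvoidsRel.not_hasRelPair {p : List A} (hp : AvoidsRel R p) : ¬ HasRelPair R p :=
  fun ⟨i, hi, hR⟩ => List.IsChain.getElem hp i hi (by simpa using hR)

theorem AvoidsRel.nodup (hcyc : NoRelFreeCycle s t R) {p : List A}
    (hp : p.IsChain (fun a b => t a = s b)) (hR : AvoidsRel R p) : p.Nodup := by
  by_contra hdup
  obtain ⟨x, l, hinf⟩ := List.exists_cons_append_singleton_infix_of_not_nodup hdup
  have hcycle : (x :: l ++ [x]).IsChain (fun a b => t a = s b) := hp.infix hinf
  have hclosed : s x = t ((x :: l).getLast (List.cons_ne_nil x l)) :=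
    (hcycle.rel_getLast_head_of_append (List.cons_ne_nil x l) (List.cons_ne_nil x [])).symm
  refine (AvoidsRel.not_hasRelPair (List.IsChain.infix hR ?_))
    (hcyc (x :: l) (List.cons_ne_nil x l) hcycle.left_of_append hclosed)
  exact (List.prefix_append _ [x]).isInfix.trans hinf

theorem exists_rightMax_of_prefix [Fintype A] (hcyc : NoRelFreeCycle s t R) (p : List A)
    (hp : IsDirPath s t p) (hR : AvoidsRel R p) :
    ∃ v, p <+: v ∧ IsDirPath s t v ∧ AvoidsRel R v ∧ RightMax s t R v := by
  by_cases hmax : RightMax s t R p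
  · exact ⟨p, List.prefix_rfl, hp, hR, hmax⟩
  obtain ⟨c, hpc, hRc⟩ : ∃ c, IsDirPath s t (p ++ [c]) ∧ AvoidsRel R (p ++ [c]) := by
    simpa [RightMax] using hmax
  have hlen : (p ++ [c]).length ≤ Fintype.card A := (hRc.nodup hcyc hpc.2).length_le_card
  obtain ⟨v, hpv, hv⟩ := exists_rightMax_of_prefix hcyc (p ++ [c]) hpc hRc
  exact ⟨v, (List.prefix_append p [c]).trans hpv, hv⟩
-- By `AvoidsRel.nodup`, extensions never get longer than `Fintype.card A`.
termination_by Fintype.card A - p.length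
decreasing_by rw [List.length_append, List.length_singleton] at hlen ⊢; omega

theorem prefix_or_prefix_of_head?_eq
    (hG2r : ∀ a b₁ b₂ : A, t a = s b₁ → t a = s b₂ → (a, b₁) ∉ R → (a, b₂) ∉ R → b₁ = b₂)
    {v v' : List A} (hv : v.IsChain (fun a b => t a = s b)) (hR : AvoidsRel R v)
    (hv' : v'.IsChain (fun a b => t a = s b)) (hR' : AvoidsRel R v')
    (hhead : v.head? = v'.head?) : v <+: v' ∨ v' <+: v := by
  induction v generalizing v' with
  | nil => exact .inl List.nil_prefix
  | cons c p ih =>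
    obtain ⟨p', rfl⟩ : ∃ p', v' = c :: p' := by cases v' <;> simp_all
    simp only [List.prefix_cons_inj]
    rcases p with _ | ⟨d, q⟩
    · exact .inl List.nil_prefix
    rcases p' with _ | ⟨d', q'⟩
    · exact .inr List.nil_prefix
    obtain rfl : d = d' := hG2r c d d' hv.rel hv'.rel hR.rel hR'.rel
    exact ih hv.tail hR.tail hv'.tail hR'.tail rfl

theorem RightMax.eq_of_prefix {v v' : List A} (hmax : RightMax s t R v) (h : v <+: v')
    (hv' : IsDirPath s t v') (hR' : AvoidsRel R v') : v = v' := by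
  obtain ⟨_ | ⟨c, l⟩, rfl⟩ := h
  · exact (List.append_nil v).symm
  · have hpre : v ++ [c] <+: v ++ c :: l := ⟨l, by simp⟩
    exact (hmax c ⟨⟨by simp, hv'.2.prefix hpre⟩, List.IsChain.prefix hR' hpre⟩).elim

theorem rightMax_unique
    (hG2r : ∀ a b₁ b₂ : A, t a = s b₁ → t a = s b₂ → (a, b₁) ∉ R → (a, b₂) ∉ R → b₁ = b₂)
    {v v' : List A} (hv : IsDirPath s t v) (hR : AvoidsRel R v) (hmax : RightMax s t R v)
    (hv' : IsDirPath s t v') (hR' : AvoidsRel R v') (hmax' : RightMax s t R v')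
    (hhead : v.head? = v'.head?) : v = v' := by
  rcases prefix_or_prefix_of_head?_eq hG2r hv.2 hR hv'.2 hR' hhead with h | h
  · exact hmax.eq_of_prefix h hv' hR'
  · exact (hmax'.eq_of_prefix h hv hR).symm

theorem getLast?_invWalk (p : List A) : (invWalk p).getLast? = p.head?.map (·, false) := by
  simp [invWalk, List.getLast?_reverse, List.head?_map]

theorem isChain_stringPair_invWalk {p : List A} (hp : p.IsChain (fun a b => t a = s b))
    (hR : AvoidsRel R p) : (invWalk p).IsChain (StringPair s t R) := by
  rw [invWalk, List.isChain_reverse, List.isChain_map]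
  refine List.isChain_iff_getElem.2 fun i hi => ?_
  simpa [StringPair, srcL, tgtL] using And.intro (hp.getElem i hi).symm (hR.getElem i hi)

theorem stringPair_inv_direct {a b : A} (hba : b ≠ a) (hbs : s b = s a) :
    StringPair s t R (b, false) (a, true) := by
  simp [StringPair, srcL, tgtL, hbs, hba]

theorem isStringWord_invWalk_append {w : List (Letter A)} {a b : A} {v : List A}
    (hvb : v.head? = some b) (hv : IsDirPath s t v) (hR : AvoidsRel R v)
    (haw : IsStringWord s t R ((a, true) :: w)) (hba : b ≠ a) (hbs : s b = s a) :
    IsStringWord s t R (invWalk v ++ (a, true) :: w) := by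
  refine ⟨by simp, (isChain_stringPair_invWalk hv.2 hR).append haw.2 ?_⟩
  simp only [getLast?_invWalk, hvb, Option.map_some, Option.mem_def, Option.some.injEq,
    List.head?_cons, forall_eq']
  exact stringPair_inv_direct hba hbs

end GentleQuiver

theorem add_hook_well_defined_general
    {V A : Type*} [Fintype A]
    (s t : A → V) (R : Set (A × A))
    -- (Q,R) is a gentle presentation:
    (hG2r : ∀ a b₁ b₂ : A, t a = s b₁ → t a = s b₂ →
      (a, b₁) ∉ R → (a, b₂) ∉ R → b₁ = b₂)
    -- the no-relation-free-cycle condition: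
    (hcyc : ∀ (p : List A) (hp : p ≠ []), p.Chain' (fun a b => t a = s b) →
      s (p.head hp) = t (p.getLast hp) → HasRelPair R p)
    (w : List (Letter A))
    (a : A) (haw : IsStringWord s t R ((a, true) :: w))
    (b : A) (hba : b ≠ a) (hbs : s b = s a) :
    (∃! v : List A, v.head? = some b ∧ IsDirPath s t v ∧ AvoidsRel R v ∧
      RightMax s t R v) ∧
    (∀ v : List A, v.head? = some b → IsDirPath s t v → AvoidsRel R v →
      RightMax s t R v →
      IsStringWord s t R (invWalk v ++ (a, true) :: w)) := by
  refine ⟨?_, fun v hvb hv hR _ => isStringWord_invWalk_append hvb hv hR haw hba hbs⟩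
  obtain ⟨v, ⟨l, rfl⟩, hv, hR, hmax⟩ :=
    exists_rightMax_of_prefix hcyc [b] ⟨List.cons_ne_nil b [], .singleton b⟩ (.singleton b)
  refine ⟨[b] ++ l, ⟨rfl, hv, hR, hmax⟩, fun v' ⟨hv'b, hv', hR', hmax'⟩ => ?_⟩
  exact rightMax_unique hG2r hv' hR' hmax' hv hR hmax hv'b

/-- Let `(Q, R)` be a gentle presentation satisfying the no-relation-free-cycle
condition.  Let `w` be a string of length ≥ 1 and `a` an arrow such that `a·w` is a
string.  Suppose there is an arrow `b ≠ a` with `s b = s a`.  Then there is a unique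
maximal `R`-avoiding directed path `v` whose first arrow is `b`, and the walk
`v⁻¹ · a · w` is a string.  Hence adding a hook at the starting point of `w`,
producing `w_ℓ = v⁻¹ a w`, is well defined. -/
theorem add_hook_well_defined
    {V A : Type*} [Fintype V] [Fintype A]
    (s t : A → V) (R : Set (A × A))
    -- (Q,R) is a gentle presentation:
    (hRcomp : ∀ r ∈ R, t r.1 = s r.2)
    (hG1s : ∀ (v : V) (a b c : A), s a = v → s b = v → s c = v → a = b ∨ a = c ∨ b = c)
    (hG1t : ∀ (v : V) (a b c : A), t a = v → t b = v → t c = v → a = b ∨ a = c ∨ b = c)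
    (hG2r : ∀ a b₁ b₂ : A, t a = s b₁ → t a = s b₂ →
      (a, b₁) ∉ R → (a, b₂) ∉ R → b₁ = b₂)
    (hG2l : ∀ a c₁ c₂ : A, t c₁ = s a → t c₂ = s a →
      (c₁, a) ∉ R → (c₂, a) ∉ R → c₁ = c₂)
    (hG3r : ∀ a b₁ b₂ : A, (a, b₁) ∈ R → (a, b₂) ∈ R → b₁ = b₂)
    (hG3l : ∀ a c₁ c₂ : A, (c₁, a) ∈ R → (c₂, a) ∈ R → c₁ = c₂)
    -- the no-relation-free-cycle condition:
    (hcyc : ∀ (p : List A) (hp : p ≠ []), p.Chain' (fun a b => t a = s b) →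
      s (p.head hp) = t (p.getLast hp) → HasRelPair R p)
    (w : List (Letter A)) (hw : IsStringWord s t R w)
    (a : A) (haw : IsStringWord s t R ((a, true) :: w))
    (b : A) (hba : b ≠ a) (hbs : s b = s a) :
    (∃! v : List A, v.head? = some b ∧ IsDirPath s t v ∧ AvoidsRel R v ∧
      RightMax s t R v) ∧
    (∀ v : List A, v.head? = some b → IsDirPath s t v → AvoidsRel R v →
      RightMax s t R v →
      IsStringWord s t R (invWalk v ++ (a, true) :: w)) :=
  add_hook_well_defined_general s t R hG2r hcyc w a haw b hba hbs
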